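/- arXiv:1102.1205 — 3 statements merged into one kernel-verified Lean document; each statement's English description precedes it below -/
import Mathlib

section
/- The kernel of the group homomorphism θ : Pin(n) → O(n), θ(a)(x) = a x ã, is exactly {1, -1}, for n ≥ 1. -/
open scoped RealInnerProductSpace
noncomputable section

/-- The quadratic form `x ↦ -‖x‖²` on `ℝⁿ`. -/
def Qn (n : ℕ) : QuadraticForm ℝ (EuclideanSpace ℝ (Fin n)) :=
  -(LinearMap.BilinMap.toQuadraticMap (innerₗ (EuclideanSpace ℝ (Fin n))))

/-- The Clifford algebra `Cl_n` generated from `ℝⁿ` by the relation `x² = -‖x‖²`. -/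
abbrev Cl (n : ℕ) := CliffordAlgebra (Qn n)

/-- The canonical embedding `ℝⁿ ⊆ Cl_n`. -/
def ιn (n : ℕ) : EuclideanSpace ℝ (Fin n) →ₗ[ℝ] Cl n := CliffordAlgebra.ι (Qn n)

/-- `Pin(n)`: the set of products of unit vectors of `ℝⁿ` inside `Cl_n`. -/
def IsPin (n : ℕ) (a : Cl n) : Prop :=
  ∃ l : List (EuclideanSpace ℝ (Fin n)),
    (∀ y ∈ l, ‖y‖ = 1) ∧ a = (l.map fun y => ιn n y).prod

/-!
If `a x ã = x` for all `x`, then multiplying on the right by `a` and using `ã a = ±1`,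
`â = ±a` (both signs being the parity of the number of unit-vector factors) puts `a` in the
twisted centralizer: `x a = â x`. Since `x a - â x` is the contraction of `a` by the polar form
of `x`, and every functional is such a polar form, all contractions of `a` vanish. Passing to
the exterior algebra, where `∑ᵢ eᵢ ∧ (eᵢ^* ⌋ ·)` acts on `⋀ᵏ` as multiplication by `k`, this
forces `a` to be a real scalar `r`, and then `r² = a ã = ±1` gives `r = ±1`.
-/

namespace CliffordAlgebra

variable {R M : Type*} [CommRing R] [AddCommGroup M] [Module R M] {Q : QuadraticForm R M}

theorem ι_mul_sub_involute_mul_ι (x : M) (a : CliffordAlgebra Q) :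
    ι Q x * a - involute a * ι Q x = contractLeft (Q.polarBilin x) a := by
  induction a using CliffordAlgebra.left_induction with
  | algebraMap r => simp [Algebra.commutes]
  | add u v hu hv => simp only [map_add, mul_add, add_mul, ← hu, ← hv]; abel
  | ι_mul b m hb =>
      rw [contractLeft_ι_mul, ← hb, map_mul, involute_ι, QuadraticMap.polarBilin_apply_apply,
        Algebra.smul_def, ← ι_mul_ι_add_swap]
      noncomm_ring

theorem prod_map_ι_mul_reverse (l : List M) :
    (l.map (ι Q)).prod * reverse (l.map (ι Q)).prod = algebraMap R _ (l.map Q).prod := by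
  induction l with
  | nil => simp
  | cons y t ih =>
    simp only [List.map_cons, List.prod_cons, reverse.map_mul, reverse_ι, map_mul]
    rw [mul_assoc, ← mul_assoc (t.map (ι Q)).prod, ih, ← mul_assoc, ← Algebra.commutes,
      mul_assoc, ι_sq_scalar]
    exact Algebra.commutes _ _

theorem algebraMap_injective [Invertible (2 : R)] :
    Function.Injective (algebraMap R (CliffordAlgebra Q)) := fun r s h ↦ by
  have h' := congrArg (equivExterior Q) h
  simp only [equivExterior, changeFormEquiv_apply, changeForm_algebraMap] at h'
  exact (ExteriorAlgebra.algebraMap_inj M r s).mp h'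

theorem reverse_mul_prod_map_ι (l : List M) :
    reverse (l.map (ι Q)).prod * (l.map (ι Q)).prod = algebraMap R _ (l.map Q).prod := by
  have h := prod_map_ι_mul_reverse (Q := Q) l.reverse
  rwa [List.map_reverse, List.map_reverse, List.prod_reverse (l.map Q), ← reverse_prod_map_ι,
    reverse_reverse] at h

end CliffordAlgebra

namespace ExteriorAlgebra

open CliffordAlgebra

variable {R M ι : Type*} [CommRing R] [AddCommGroup M] [Module R M] [Fintype ι]

def numberOp (b : Module.Basis ι R M) : ExteriorAlgebra R M →ₗ[R] ExteriorAlgebra R M :=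
  ∑ i, (LinearMap.mulLeft R (ExteriorAlgebra.ι R (b i))).comp (contractLeft (b.coord i))

theorem numberOp_ι_mul (b : Module.Basis ι R M) (v : M) (x : ExteriorAlgebra R M) :
    numberOp b (ExteriorAlgebra.ι R v * x) =
      ExteriorAlgebra.ι R v * x + ExteriorAlgebra.ι R v * numberOp b x := by
  have hv : ∑ i, b.coord i v • ExteriorAlgebra.ι R (b i) = ExteriorAlgebra.ι R v := by
    simp_rw [← map_smul, ← map_sum, Module.Basis.coord_apply, b.sum_repr]
  have hterm : ∀ i,
      ExteriorAlgebra.ι R (b i) * contractLeft (b.coord i) (ExteriorAlgebra.ι R v * x)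
        = b.coord i v • (ExteriorAlgebra.ι R (b i) * x)
        + ExteriorAlgebra.ι R v * (ExteriorAlgebra.ι R (b i) * contractLeft (b.coord i) x) := by
    intro i
    rw [contractLeft_ι_mul, mul_sub, mul_smul_comm, ← mul_assoc,
      eq_neg_of_add_eq_zero_left (ι_add_mul_swap (b i) v), neg_mul, sub_neg_eq_add, mul_assoc]
  simp only [numberOp, LinearMap.sum_apply, LinearMap.comp_apply, LinearMap.mulLeft_apply, hterm,
    Finset.sum_add_distrib, ← Finset.mul_sum, ← smul_mul_assoc, ← Finset.sum_mul, hv]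

theorem numberOp_of_mem_exteriorPower (b : Module.Basis ι R M) {k : ℕ} {x : ExteriorAlgebra R M}
    (hx : x ∈ ⋀[R]^k M) : numberOp b x = k • x := by
  induction hx using Submodule.pow_induction_on_left' with
  | algebraMap r => simp [numberOp, contractLeft_algebraMap]
  | add x y i _ _ ihx ihy => rw [map_add, ihx, ihy, smul_add]
  | mem_mul m hm i x _ ih =>
    obtain ⟨v, rfl⟩ := hm
    rw [numberOp_ι_mul, ih, mul_smul_comm, succ_nsmul, add_comm]

theorem decompose_numberOp (b : Module.Basis ι R M) (x : ExteriorAlgebra R M) (k : ℕ) :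
    (DirectSum.decompose (fun i : ℕ ↦ ⋀[R]^i M) (numberOp b x) k : ExteriorAlgebra R M)
      = k • (DirectSum.decompose (fun i : ℕ ↦ ⋀[R]^i M) x k : ExteriorAlgebra R M) := by
  induction x using DirectSum.Decomposition.inductionOn (fun i : ℕ ↦ ⋀[R]^i M) with
  | zero => simp
  | @homogeneous i m =>
    rw [numberOp_of_mem_exteriorPower b m.2]
    rcases eq_or_ne i k with rfl | hik
    · rw [DirectSum.decompose_of_mem_same (fun i : ℕ ↦ ⋀[R]^i M) (nsmul_mem m.2 _),
        DirectSum.decompose_of_mem_same (fun i : ℕ ↦ ⋀[R]^i M) m.2]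
    · rw [DirectSum.decompose_of_mem_ne (fun i : ℕ ↦ ⋀[R]^i M) (nsmul_mem m.2 _) hik,
        DirectSum.decompose_of_mem_ne (fun i : ℕ ↦ ⋀[R]^i M) m.2 hik, smul_zero]
  | add x y hx hy =>
    simp only [map_add, DirectSum.decompose_add, DirectSum.add_apply, Submodule.coe_add, hx, hy,
      smul_add]

theorem mem_range_algebraMap_of_forall_contractLeft_eq_zero {K V : Type*} [Field K] [CharZero K]
    [AddCommGroup V] [Module K V] [FiniteDimensional K V] {x : ExteriorAlgebra K V}
    (h : ∀ d : Module.Dual K V, contractLeft d x = 0) :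
    x ∈ Set.range (algebraMap K (ExteriorAlgebra K V)) := by
  classical
  have hpos : ∀ k ≠ 0,
      (DirectSum.decompose (fun i : ℕ ↦ ⋀[K]^i V) x k : ExteriorAlgebra K V) = 0 := by
    intro k hk
    have h0 := decompose_numberOp (Module.finBasis K V) x k
    simp only [numberOp, LinearMap.sum_apply, LinearMap.comp_apply, h, map_zero,
      Finset.sum_const_zero, DirectSum.decompose_zero, DirectSum.zero_apply,
      ZeroMemClass.coe_zero] at h0
    rw [← Nat.cast_smul_eq_nsmul K] at h0
    exact (smul_eq_zero.mp h0.symm).resolve_left (Nat.cast_ne_zero.mpr hk)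
  have hx : x = DirectSum.decompose (fun i : ℕ ↦ ⋀[K]^i V) x 0 := by
    conv_lhs => rw [← DirectSum.sum_support_decompose (fun i : ℕ ↦ ⋀[K]^i V) x]
    exact Finset.sum_eq_single 0 (fun k _ hk ↦ hpos k hk) (by simp)
  have hmem : x ∈ ⋀[K]^0 V := hx ▸ Submodule.coe_mem _
  rwa [exteriorPower, pow_zero, Submodule.mem_one] at hmem

end ExteriorAlgebra

namespace CliffordAlgebra

variable {K V : Type*} [Field K] [CharZero K] [AddCommGroup V] [Module K V]
  [FiniteDimensional K V] {Q : QuadraticForm K V}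

theorem mem_range_algebraMap_of_forall_contractLeft_eq_zero {x : CliffordAlgebra Q}
    (h : ∀ d : Module.Dual K V, contractLeft d x = 0) :
    x ∈ Set.range (algebraMap K (CliffordAlgebra Q)) := by
  let _ : Invertible (2 : K) := invertibleOfNonzero two_ne_zero
  obtain ⟨r, hr⟩ := ExteriorAlgebra.mem_range_algebraMap_of_forall_contractLeft_eq_zero
    (x := equivExterior Q x) fun d ↦ by
      rw [equivExterior, changeFormEquiv_apply, ← changeForm_contractLeft, h d, map_zero]
  exact ⟨r, (equivExterior Q).injective
    ((changeForm_algebraMap changeForm.associated_neg_proof r).trans hr)⟩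

theorem mem_range_algebraMap_of_ι_mul_eq_involute_mul_ι (hQ : Q.Anisotropic)
    {a : CliffordAlgebra Q} (h : ∀ x, ι Q x * a = involute a * ι Q x) :
    a ∈ Set.range (algebraMap K (CliffordAlgebra Q)) := by
  have hsurj : Function.Surjective Q.polarBilin := by
    refine (LinearMap.injective_iff_surjective_of_finrank_eq_finrank
      Subspace.dual_finrank_eq.symm).mp ((injective_iff_map_eq_zero _).mpr fun x hx ↦ hQ x ?_)
    have hxx := LinearMap.congr_fun hx x
    rw [QuadraticMap.polarBilin_apply_apply, QuadraticMap.polar_self] at hxx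
    simpa using hxx
  refine mem_range_algebraMap_of_forall_contractLeft_eq_zero fun d ↦ ?_
  obtain ⟨x, rfl⟩ := hsurj d
  rw [← ι_mul_sub_involute_mul_ι, h, sub_self]

end CliffordAlgebra

theorem Qn_apply (n : ℕ) (x : EuclideanSpace ℝ (Fin n)) : Qn n x = -‖x‖ ^ 2 := by
  simp [Qn]

theorem Qn_anisotropic (n : ℕ) : (Qn n).Anisotropic := fun x hx ↦ by
  simpa [Qn_apply] using hx

theorem prod_map_Qn_of_forall_norm_eq_one {n : ℕ} {l : List (EuclideanSpace ℝ (Fin n))}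
    (hl : ∀ y ∈ l, ‖y‖ = 1) : (l.map (Qn n)).prod = (-1) ^ l.length := by
  rw [← List.length_map (Qn n)]
  refine List.prod_eq_pow_card _ _ fun q hq ↦ ?_
  obtain ⟨y, hy, rfl⟩ := List.mem_map.mp hq
  rw [Qn_apply, hl y hy, one_pow]

open CliffordAlgebra in
theorem stmt3_general (n : ℕ) (a : Cl n) (ha : IsPin n a) :
    (∀ x, a * ιn n x * CliffordAlgebra.reverse a = ιn n x) ↔ (a = 1 ∨ a = -1) := by
  refine ⟨fun h ↦ ?_, by rintro (rfl | rfl) x <;> simp⟩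
  obtain ⟨l, hl, rfl⟩ := ha
  simp only [ιn] at h ⊢
  set P := (l.map (ι (Qn n))).prod
  have hQ := prod_map_Qn_of_forall_norm_eq_one hl
  have htw : ∀ x, ι (Qn n) x * P = involute P * ι (Qn n) x := fun x ↦ calc
    ι (Qn n) x * P = P * ι (Qn n) x * (reverse P * P) := by rw [← mul_assoc, h x]
    _ = (-1 : ℝ) ^ l.length • P * ι (Qn n) x := by
      rw [reverse_mul_prod_map_ι, hQ, ← Algebra.commutes, ← Algebra.smul_def, smul_mul_assoc]
    _ = involute P * ι (Qn n) x := by rw [involute_prod_map_ι]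
  obtain ⟨r, hr⟩ := mem_range_algebraMap_of_ι_mul_eq_involute_mul_ι (Qn_anisotropic n) htw
  let _ : Invertible (2 : ℝ) := invertibleOfNonzero two_ne_zero
  have hr2 : r * r = (-1) ^ l.length := algebraMap_injective <| calc
    algebraMap ℝ (Cl n) (r * r) = P * reverse P := by rw [← hr, map_mul, reverse.commutes]
    _ = algebraMap ℝ (Cl n) ((-1) ^ l.length) := by rw [prod_map_ι_mul_reverse, hQ]
  rcases neg_one_pow_eq_or ℝ l.length with h1 | h1 <;> rw [h1] at hr2
  · rcases mul_self_eq_one_iff.mp hr2 with rfl | rfl <;> simp [← hr]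
  · nlinarith [mul_self_nonneg r]

/-- The kernel of the homomorphism `θ : Pin(n) → O(n)`, `θ(a)(x) = a x ã`, is exactly
`{1, -1}` (for `n ≥ 1`): an element `a ∈ Pin(n)` acts trivially on `ℝⁿ` iff `a = ±1`. -/
theorem stmt3 (n : ℕ) (hn : 1 ≤ n) (a : Cl n) (ha : IsPin n a) :
    (∀ x, a * ιn n x * CliffordAlgebra.reverse a = ιn n x) ↔ (a = 1 ∨ a = -1) :=
  stmt3_general n a ha
end
end

section
/- Almansi–Fischer decomposition: for k ≥ 1 and n ≥ 2, every Cl_n-valued harmonic polynomial h_k homogeneous of degree k decomposes uniquely as h_k(u) = p_k(u) + u p_{k-1}(u), where p_k is left monogenic homogeneous of degree k and p_{k-1} is left monogenic homogeneous of degree k-1. Thus H_k = M_k ⊕ u M_{k-1} as right Cl_n-modules. -/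
noncomputable section

/-- The Dirac operator `D = Σ_j e_j ∂/∂u_j` associated to Clifford generators `e`. -/
def diracOp {n : ℕ} {A : Type*} [NormedRing A] [NormedAlgebra ℝ A] (e : Fin n → A)
    (f : EuclideanSpace ℝ (Fin n) → A) (u : EuclideanSpace ℝ (Fin n)) : A :=
  ∑ j : Fin n, e j * fderiv ℝ f u (EuclideanSpace.single j 1)

/-- `f` is homogeneous of degree `k`. -/
def Homog {n : ℕ} {A : Type*} [NormedRing A] [NormedAlgebra ℝ A] (k : ℕ)
    (f : EuclideanSpace ℝ (Fin n) → A) : Prop :=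
  ∀ (c : ℝ) u, f (c • u) = c ^ k • f u

namespace AF

variable {n : ℕ} {A : Type*} [NormedRing A] [NormedAlgebra ℝ A]

local notation "E" => EuclideanSpace ℝ (Fin n)

lemma repr_eq (u : E) : u = ∑ j, u j • EuclideanSpace.single j (1 : ℝ) := by
  ext i
  rw [WithLp.ofLp_sum, Finset.sum_apply]
  simp [EuclideanSpace.single_apply]

lemma apply_repr (L : E →L[ℝ] A) (u : E) :
    L u = ∑ j, u j • L (EuclideanSpace.single j 1) := by
  conv_lhs => rw [repr_eq u]
  simp

/-- The multiplication-by-`u` map as a continuous linear map. -/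
def Lmap (e : Fin n → A) : E →L[ℝ] A :=
  ∑ i, (EuclideanSpace.proj i : E →L[ℝ] ℝ).smulRight (e i)

lemma Lmap_apply (e : Fin n → A) (u : E) : Lmap e u = ∑ i, u i • e i := by
  simp [Lmap]

lemma Lmap_single (e : Fin n → A) (j : Fin n) :
    Lmap e (EuclideanSpace.single j 1) = e j := by
  simp [Lmap_apply, EuclideanSpace.single_apply]

/-- Euler's identity for homogeneous functions. -/
lemma euler {m : ℕ} {f : E → A} (hf : Differentiable ℝ f) (hh : Homog m f) (u : E) :
    fderiv ℝ f u u = (m : ℝ) • f u := by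
  have hs : HasDerivAt (fun c : ℝ => c • u) u 1 := by
    simpa using (hasDerivAt_id (1 : ℝ)).smul_const u
  have h1 : HasDerivAt (fun c : ℝ => f (c • u)) (fderiv ℝ f u u) 1 := by
    have := ((hf ((1:ℝ) • u)).hasFDerivAt.comp_hasDerivAt 1 hs)
    simpa [Function.comp_def] using this
  have h2 : HasDerivAt (fun c : ℝ => c ^ m • f u) ((m : ℝ) • f u) 1 := by
    simpa using (hasDerivAt_pow m (1 : ℝ)).smul_const (f u)
  have hfun : (fun c : ℝ => f (c • u)) = fun c : ℝ => c ^ m • f u :=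
    funext fun c => hh c u
  rw [hfun] at h1
  exact h1.unique h2

lemma euler' {m : ℕ} {f : E → A} (hf : Differentiable ℝ f) (hh : Homog m f) (u : E) :
    ∑ j, u j • fderiv ℝ f u (EuclideanSpace.single j 1) = (m : ℝ) • f u := by
  rw [← apply_repr]
  exact euler hf hh u

/-- `T` such that `diracOp e f u = T (fderiv ℝ f u)`. -/
def Tmap (e : Fin n → A) : (E →L[ℝ] A) →L[ℝ] A :=
  ∑ j, (ContinuousLinearMap.mul ℝ A (e j)).comp
    (ContinuousLinearMap.apply ℝ A (EuclideanSpace.single j 1))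

lemma dirac_eq (e : Fin n → A) (f : E → A) (u : E) :
    diracOp e f u = Tmap e (fderiv ℝ f u) := by
  simp [diracOp, Tmap, ContinuousLinearMap.sum_apply]

lemma Tmap_apply (e : Fin n → A) (L : E →L[ℝ] A) :
    Tmap e L = ∑ j, e j * L (EuclideanSpace.single j 1) := by
  simp [Tmap, ContinuousLinearMap.sum_apply]

lemma contDiff_dirac (e : Fin n → A) {f : E → A} (hf : ContDiff ℝ (⊤ : ℕ∞) f) :
    ContDiff ℝ (⊤ : ℕ∞) (diracOp e f) := by
  have : diracOp e f = fun u => Tmap e (fderiv ℝ f u) := funext fun u => dirac_eq e f u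
  rw [this]
  exact (Tmap e).contDiff.comp (hf.fderiv_right (mod_cast le_top))

lemma fderiv_dirac (e : Fin n → A) {f : E → A} (hf : ContDiff ℝ (⊤ : ℕ∞) f) (u v : E) :
    fderiv ℝ (diracOp e f) u v = Tmap e (fderiv ℝ (fderiv ℝ f) u v) := by
  have hfd : diracOp e f = fun u => Tmap e (fderiv ℝ f u) := funext fun u => dirac_eq e f u
  have hdiff : DifferentiableAt ℝ (fderiv ℝ f) u :=
    ((hf.fderiv_right (m := (⊤ : ℕ∞)) (mod_cast le_top)).differentiable (by simp)) u
  rw [hfd]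
  have hcomp := ((Tmap e).hasFDerivAt (x := fderiv ℝ f u)).comp u hdiff.hasFDerivAt
  rw [show (fun u => (Tmap e) (fderiv ℝ f u)) = ⇑(Tmap e) ∘ fderiv ℝ f from rfl,
    hcomp.fderiv]
  rfl

lemma two_smul_eq_zero {x : A} (hx : x + x = 0) : x = 0 := by
  have h2 : (2 : ℝ) • x = 0 := by rw [two_smul]; exact hx

  have : x = (2 : ℝ)⁻¹ • ((2 : ℝ) • x) := by rw [smul_smul]; norm_num
  rw [this, h2, smul_zero]

lemma neg_two_eq (x : A) : (-2 : A) * x = -((2:ℝ) • x) := by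
  rw [neg_mul, two_mul, ← two_smul ℝ]

/-- `D² = -Δ` : for harmonic `h`, `D h` is monogenic. -/
lemma dirac_dirac (e : Fin n → A)
    (he : ∀ i j, e i * e j + e j * e i = if i = j then (-2 : A) else 0)
    {h : E → A} (hsm : ContDiff ℝ (⊤ : ℕ∞) h)
    (hharm : ∀ u, ∑ j : Fin n,
      fderiv ℝ (fun y => fderiv ℝ h y (EuclideanSpace.single j 1)) u
        (EuclideanSpace.single j 1) = 0) (u : E) :
    diracOp e (diracOp e h) u = 0 := by
  classical
  set B := fderiv ℝ (fderiv ℝ h) u with hB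
  have hdiff : ∀ y, HasFDerivAt h (fderiv ℝ h y) y := fun y =>
    ((hsm.differentiable (by simp)) y).hasFDerivAt
  have hBd : HasFDerivAt (fderiv ℝ h) B u :=
    (((hsm.fderiv_right (m := (⊤ : ℕ∞)) (mod_cast le_top)).differentiable (by simp)) u).hasFDerivAt
  have hsymm : ∀ v w : E, B v w = B w v := fun v w =>
    second_derivative_symmetric hdiff hBd v w
  -- express DDh in terms of B
  have hDD : diracOp e (diracOp e h) u
      = ∑ i, ∑ j, e i * (e j * B (EuclideanSpace.single i 1) (EuclideanSpace.single j 1)) := by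
    unfold diracOp
    refine Finset.sum_congr rfl fun i _ => ?_
    rw [show (fun u => ∑ j : Fin n, e j * (fderiv ℝ h u) (EuclideanSpace.single j 1))
        = diracOp e h from rfl]
    rw [fderiv_dirac e hsm u (EuclideanSpace.single i 1), Tmap_apply, Finset.mul_sum, hB]
  -- second derivative in terms of B
  have hb : ∀ v : E, ∀ j : Fin n,
      fderiv ℝ (fun y => fderiv ℝ h y v) u (EuclideanSpace.single j 1)
        = B (EuclideanSpace.single j 1) v := by
    intro v j
    have : (fun y => fderiv ℝ h y v)
        = fun y => (ContinuousLinearMap.apply ℝ A v) (fderiv ℝ h y) := rfl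
    have hcomp := ((ContinuousLinearMap.apply ℝ A v).hasFDerivAt
      (x := fderiv ℝ h u)).comp u hBd
    rw [this, show (fun y => (ContinuousLinearMap.apply ℝ A v) (fderiv ℝ h y))
      = ⇑(ContinuousLinearMap.apply ℝ A v) ∘ fderiv ℝ h from rfl, hcomp.fderiv]
    rfl
  have htr : ∑ j : Fin n, B (EuclideanSpace.single j 1) (EuclideanSpace.single j 1) = 0 := by
    have := hharm u
    rw [Finset.sum_congr rfl fun j _ => hb (EuclideanSpace.single j 1) j] at this
    exact this
  set b : Fin n → Fin n → A := fun i j =>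
    B (EuclideanSpace.single i 1) (EuclideanSpace.single j 1) with hbdef
  have hbsymm : ∀ i j, b i j = b j i := fun i j => hsymm _ _
  have h1 : ∑ i, ∑ j, e i * (e j * b i j) = ∑ i, ∑ j, e j * (e i * b i j) := by
    rw [Finset.sum_comm]
    refine Finset.sum_congr rfl fun i _ => Finset.sum_congr rfl fun j _ => ?_
    rw [hbsymm i j]
  have key : (∑ i, ∑ j, e i * (e j * b i j)) + (∑ i, ∑ j, e i * (e j * b i j)) = 0 := by
    nth_rewrite 2 [h1]
    calc (∑ i, ∑ j, e i * (e j * b i j)) + (∑ i, ∑ j, e j * (e i * b i j))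
        = ∑ i, ∑ j, (e i * e j + e j * e i) * b i j := by
          rw [← Finset.sum_add_distrib]
          refine Finset.sum_congr rfl fun i _ => ?_
          rw [← Finset.sum_add_distrib]
          refine Finset.sum_congr rfl fun j _ => ?_
          rw [add_mul, mul_assoc, mul_assoc]
      _ = ∑ i, ∑ j, (if i = j then (-2:A) else 0) * b i j := by
          refine Finset.sum_congr rfl fun i _ => Finset.sum_congr rfl fun j _ => ?_
          rw [he i j]
      _ = ∑ i, (-2 : A) * b i i := by
          refine Finset.sum_congr rfl fun i _ => ?_
          rw [Finset.sum_eq_single i]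
          · simp
          · intro j _ hj; simp [Ne.symm hj]
          · simp
      _ = -((2:ℝ) • ∑ i, b i i) := by
          rw [Finset.smul_sum, ← Finset.sum_neg_distrib]
          exact Finset.sum_congr rfl fun i _ => neg_two_eq (b i i)
      _ = 0 := by rw [htr]; simp
  rw [hDD]
  exact two_smul_eq_zero key

lemma real_smul_cancel {c : ℝ} (hc : c ≠ 0) {x y : A} (h : c • x = c • y) : x = y := by
  have := congrArg (fun z => c⁻¹ • z) h
  simpa [inv_smul_smul₀ hc] using this

lemma dirac_smul (e : Fin n → A) (r : ℝ) {f : E → A} (hf : Differentiable ℝ f) (u : E) :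
    diracOp e (fun x => r • f x) u = r • diracOp e f u := by
  unfold diracOp
  rw [Finset.smul_sum]
  refine Finset.sum_congr rfl fun j _ => ?_
  rw [fderiv_fun_const_smul (hf u) r]
  simp [mul_smul_comm]

lemma dirac_sub (e : Fin n → A) {f g : E → A} (hf : Differentiable ℝ f)
    (hg : Differentiable ℝ g) (u : E) :
    diracOp e (fun x => f x - g x) u = diracOp e f u - diracOp e g u := by
  unfold diracOp
  rw [← Finset.sum_sub_distrib]
  refine Finset.sum_congr rfl fun j _ => ?_
  rw [fderiv_fun_sub (hf u) (hg u)]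
  simp [mul_sub]

lemma dirac_add (e : Fin n → A) {f g : E → A} (hf : Differentiable ℝ f)
    (hg : Differentiable ℝ g) (u : E) :
    diracOp e (fun x => f x + g x) u = diracOp e f u + diracOp e g u := by
  unfold diracOp
  rw [← Finset.sum_add_distrib]
  refine Finset.sum_congr rfl fun j _ => ?_
  rw [fderiv_fun_add (hf u) (hg u)]
  simp [mul_add]

lemma homog_fderiv {m : ℕ} {f : E → A} (hf : Differentiable ℝ f) (hh : Homog m f)
    (c : ℝ) (u v : E) :
    c • fderiv ℝ f (c • u) v = c ^ m • fderiv ℝ f u v := by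
  have hg : HasFDerivAt (fun x : E => c • x) (c • ContinuousLinearMap.id ℝ _) u := by
    exact (hasFDerivAt_id u).const_smul c
  have h1 : fderiv ℝ (fun x => f (c • x)) u
      = (fderiv ℝ f (c • u)).comp (c • ContinuousLinearMap.id ℝ _) :=
    ((hf (c • u)).hasFDerivAt.comp u hg).fderiv
  have h2 : (fun x => f (c • x)) = fun x => c ^ m • f x := funext fun x => hh c x
  rw [h2, fderiv_fun_const_smul (hf u) (c ^ m)] at h1
  have h3 := congrArg (fun L : E →L[ℝ] A => L v) h1
  simp only [ContinuousLinearMap.smul_apply, ContinuousLinearMap.comp_apply,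
    ContinuousLinearMap.id_apply, map_smul] at h3
  exact h3.symm

lemma dirac_homog_ne (e : Fin n → A) {f : E → A} (hf : Differentiable ℝ f) {m : ℕ}
    (hm : 1 ≤ m) (hh : Homog m f) {c : ℝ} (hc : c ≠ 0) (u : E) :
    diracOp e f (c • u) = c ^ (m - 1) • diracOp e f u := by
  unfold diracOp
  rw [Finset.smul_sum]
  refine Finset.sum_congr rfl fun j _ => ?_
  rw [← mul_smul_comm]
  congr 1
  have h1 := homog_fderiv hf hh c u (EuclideanSpace.single j 1)
  have h2 : c ^ m = c * c ^ (m - 1) := by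
    conv_lhs => rw [show m = (m - 1) + 1 by omega]
    rw [pow_succ']
  rw [h2, mul_smul] at h1
  exact real_smul_cancel hc h1

lemma dirac_homog (e : Fin n → A) {f : E → A} (hf : ContDiff ℝ (⊤ : ℕ∞) f) {m : ℕ}
    (hm : 1 ≤ m) (hh : Homog m f) : Homog (m - 1) (diracOp e f) := by
  intro c u
  rcases eq_or_ne c 0 with rfl | hc
  · have hcont : Continuous fun t : ℝ => diracOp e f (t • u) :=
      (contDiff_dirac e hf).continuous.comp (by continuity)
    have hcont2 : Continuous fun t : ℝ => t ^ (m - 1) • diracOp e f u := by continuity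
    have heq : Set.EqOn (fun t : ℝ => diracOp e f (t • u))
        (fun t : ℝ => t ^ (m - 1) • diracOp e f u) {(0 : ℝ)}ᶜ := fun t ht =>
      dirac_homog_ne e (hf.differentiable (by simp)) hm hh ht u
    have := Continuous.ext_on (dense_compl_singleton (0 : ℝ)) hcont hcont2 heq
    exact congrFun this 0
  · exact dirac_homog_ne e (hf.differentiable (by simp)) hm hh hc u

lemma e_sq (e : Fin n → A)
    (he : ∀ i j, e i * e j + e j * e i = if i = j then (-2 : A) else 0) (j : Fin n) :
    e j * e j = -1 := by
  have h0 : e j * e j + e j * e j = -2 := by simpa using he j j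
  refine real_smul_cancel (two_ne_zero (α := ℝ)) ?_
  rw [two_smul, h0, two_smul]
  norm_num

lemma dirac_Lmul (e : Fin n → A)
    (he : ∀ i j, e i * e j + e j * e i = if i = j then (-2 : A) else 0)
    {q : E → A} (hq : ContDiff ℝ (⊤ : ℕ∞) q) (hmq : ∀ u, diracOp e q u = 0)
    {m : ℕ} (hhq : Homog m q) (u : E) :
    diracOp e (fun x => Lmap e x * q x) u = (-((n : ℝ) + 2 * m)) • q u := by
  have hqd : Differentiable ℝ q := hq.differentiable (by simp)
  have hprod : ∀ j, fderiv ℝ (fun x => Lmap e x * q x) u (EuclideanSpace.single j 1)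
      = Lmap e u * fderiv ℝ q u (EuclideanSpace.single j 1) + e j * q u := by
    intro j
    have hL : HasFDerivAt (fun x : E => Lmap e x) (Lmap e) u := (Lmap e).hasFDerivAt
    rw [(hL.fun_mul' (hqd u).hasFDerivAt).fderiv]
    simp [ContinuousLinearMap.smulRight_apply, Lmap_single, smul_eq_mul]
  have expand : diracOp e (fun x => Lmap e x * q x) u
      = (∑ j, e j * (Lmap e u * fderiv ℝ q u (EuclideanSpace.single j 1)))
        + ∑ j, e j * (e j * q u) := by
    unfold diracOp
    rw [← Finset.sum_add_distrib]
    refine Finset.sum_congr rfl fun j _ => ?_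
    rw [hprod j, mul_add]
  have part2 : ∑ j : Fin n, e j * (e j * q u) = -((n : ℝ) • q u) := by
    have h1 : ∀ j : Fin n, e j * (e j * q u) = -(q u) := fun j => by
      rw [← mul_assoc, e_sq e he j, neg_one_mul]
    rw [Finset.sum_congr rfl fun j _ => h1 j, Finset.sum_const, Finset.card_univ,
      Fintype.card_fin, ← Nat.cast_smul_eq_nsmul ℝ, smul_neg]
  have hcross : ∀ j, e j * Lmap e u = u j • (-2 : A) - Lmap e u * e j := by
    intro j
    rw [Lmap_apply, Finset.mul_sum, Finset.sum_mul]
    have h1 : ∀ i : Fin n, e j * (u i • e i)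
        = u i • (if i = j then (-2 : A) else 0) - u i • e i * e j := by
      intro i
      rw [mul_smul_comm, smul_mul_assoc, ← smul_sub]
      congr 1
      have := he i j
      rw [← this]
      abel
    rw [Finset.sum_congr rfl fun i _ => h1 i, Finset.sum_sub_distrib]
    congr 1
    rw [Finset.sum_eq_single j]
    · simp
    · intro i _ hi; simp [hi]
    · simp
  have part1 : ∑ j : Fin n, e j * (Lmap e u * fderiv ℝ q u (EuclideanSpace.single j 1))
      = -((2 * (m : ℝ)) • q u) := by
    calc ∑ j : Fin n, e j * (Lmap e u * fderiv ℝ q u (EuclideanSpace.single j 1))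
        = ∑ j : Fin n, ((u j • (-2 : A)) * fderiv ℝ q u (EuclideanSpace.single j 1)
            - Lmap e u * (e j * fderiv ℝ q u (EuclideanSpace.single j 1))) := by
          refine Finset.sum_congr rfl fun j _ => ?_
          rw [← mul_assoc, hcross j, sub_mul, mul_assoc]
      _ = (∑ j : Fin n, (u j • (-2 : A)) * fderiv ℝ q u (EuclideanSpace.single j 1))
            - Lmap e u * ∑ j : Fin n, e j * fderiv ℝ q u (EuclideanSpace.single j 1) := by
          rw [Finset.sum_sub_distrib, Finset.mul_sum]
      _ = ∑ j : Fin n, (u j • (-2 : A)) * fderiv ℝ q u (EuclideanSpace.single j 1) := by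
          rw [show (∑ j : Fin n, e j * fderiv ℝ q u (EuclideanSpace.single j 1))
            = diracOp e q u from rfl, hmq u, mul_zero, sub_zero]
      _ = -((2 : ℝ) • ∑ j : Fin n, u j • fderiv ℝ q u (EuclideanSpace.single j 1)) := by
          rw [Finset.smul_sum, ← Finset.sum_neg_distrib]
          refine Finset.sum_congr rfl fun j _ => ?_
          rw [smul_mul_assoc, neg_two_eq, smul_neg, smul_comm]
      _ = -((2 * (m : ℝ)) • q u) := by
          rw [euler' hqd hhq u, smul_smul]
  rw [expand, part1, part2]
  module

end AF

open AF in
/-- Almansi–Fischer decomposition: in an algebra `A` with Clifford generators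
`e i e j + e j e i = -2δ_{ij}` for `ℝⁿ` (`n ≥ 2`), every `A`-valued harmonic polynomial
`h` homogeneous of degree `k ≥ 1` decomposes uniquely as `h(u) = p(u) + u q(u)` with `p`
left monogenic homogeneous of degree `k` and `q` left monogenic homogeneous of degree
`k - 1`; i.e. `H_k = M_k ⊕ u M_{k-1}`. -/
theorem stmt6 (n k : ℕ) (hn : 2 ≤ n) (hk : 1 ≤ k) {A : Type*} [NormedRing A]
    [NormedAlgebra ℝ A] (e : Fin n → A)
    (he : ∀ i j, e i * e j + e j * e i = if i = j then (-2 : A) else 0)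
    (h : EuclideanSpace ℝ (Fin n) → A) (hsm : ContDiff ℝ (⊤ : ℕ∞) h)
    (hharm : ∀ u, ∑ j : Fin n,
      fderiv ℝ (fun y => fderiv ℝ h y (EuclideanSpace.single j 1)) u
        (EuclideanSpace.single j 1) = 0)
    (hhom : Homog k h) :
    ∃ p q : EuclideanSpace ℝ (Fin n) → A,
      (ContDiff ℝ (⊤ : ℕ∞) p ∧ (∀ u, diracOp e p u = 0) ∧ Homog k p) ∧
      (ContDiff ℝ (⊤ : ℕ∞) q ∧ (∀ u, diracOp e q u = 0) ∧ Homog (k - 1) q) ∧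
      (∀ u, h u = p u + (∑ i : Fin n, u i • e i) * q u) ∧
      (∀ p' q' : EuclideanSpace ℝ (Fin n) → A,
        (ContDiff ℝ (⊤ : ℕ∞) p' ∧ (∀ u, diracOp e p' u = 0) ∧ Homog k p') →
        (ContDiff ℝ (⊤ : ℕ∞) q' ∧ (∀ u, diracOp e q' u = 0) ∧ Homog (k - 1) q') →
        (∀ u, h u = p' u + (∑ i : Fin n, u i • e i) * q' u) →
        p' = p ∧ q' = q) := by
  classical
  set c : ℝ := ((n : ℝ) + 2 * ((k - 1 : ℕ) : ℝ))⁻¹ with hc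
  have hden : ((n : ℝ) + 2 * ((k - 1 : ℕ) : ℝ)) ≠ 0 := by
    have h2 : (2 : ℝ) ≤ (n : ℝ) := by exact_mod_cast hn
    have h3 : (0 : ℝ) ≤ ((k - 1 : ℕ) : ℝ) := Nat.cast_nonneg _
    nlinarith
  set q : EuclideanSpace ℝ (Fin n) → A := fun u => (-c) • diracOp e h u with hqdef
  set p : EuclideanSpace ℝ (Fin n) → A := fun u => h u - Lmap e u * q u with hpdef
  have hDsm : ContDiff ℝ (⊤ : ℕ∞) (diracOp e h) := contDiff_dirac e hsm
  have hqsm : ContDiff ℝ (⊤ : ℕ∞) q := hDsm.const_smul (-c)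
  have hqdiff : Differentiable ℝ q := hqsm.differentiable (by simp)
  have hqmono : ∀ u, diracOp e q u = 0 := by
    intro u
    rw [hqdef, dirac_smul e (-c) (hDsm.differentiable (by simp)) u,
      dirac_dirac e he hsm hharm u, smul_zero]
  have hDhom : Homog (k - 1) (diracOp e h) := dirac_homog e hsm hk hhom
  have hqhom : Homog (k - 1) q := by
    intro t u
    rw [hqdef]
    simp only
    rw [hDhom t u, smul_comm]
  have hLq : ∀ u, diracOp e (fun x => Lmap e x * q x) u = diracOp e h u := by
    intro u
    rw [dirac_Lmul e he hqsm hqmono hqhom u, hqdef]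
    simp only
    rw [smul_smul]
    rw [show -((n : ℝ) + 2 * ((k - 1 : ℕ) : ℝ)) * -c = 1 from by
      rw [hc, neg_mul_neg, mul_inv_cancel₀ hden]]
    rw [one_smul]
  have hLqdiff : Differentiable ℝ fun x => Lmap e x * q x :=
    ((Lmap e).differentiable).mul hqdiff
  have hpsm : ContDiff ℝ (⊤ : ℕ∞) p := hsm.sub ((Lmap e).contDiff.mul hqsm)
  have hpmono : ∀ u, diracOp e p u = 0 := by
    intro u
    rw [hpdef, dirac_sub e (hsm.differentiable (by simp)) hLqdiff u, hLq u, sub_self]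
  have hck : ∀ t : ℝ, t * t ^ (k - 1) = t ^ k := by
    intro t
    conv_rhs => rw [show k = (k - 1) + 1 by omega]
    rw [pow_succ']
  have hphom : Homog k p := by
    intro t u
    rw [hpdef]
    simp only
    rw [hhom t u, map_smul, hqhom t u, smul_mul_assoc, mul_smul_comm, smul_smul,
      hck t, ← smul_sub]
  have hdec : ∀ u, h u = p u + (∑ i : Fin n, u i • e i) * q u := by
    intro u
    rw [← Lmap_apply, hpdef]
    simp only
    rw [sub_add_cancel]
  refine ⟨p, q, ⟨hpsm, hpmono, hphom⟩, ⟨hqsm, hqmono, hqhom⟩, hdec, ?_⟩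
  rintro p' q' ⟨hp'sm, hp'mono, hp'hom⟩ ⟨hq'sm, hq'mono, hq'hom⟩ hdec'
  have hfun : h = fun u => p' u + Lmap e u * q' u := by
    funext u
    rw [hdec' u, Lmap_apply]
  have hq'diff : Differentiable ℝ q' := hq'sm.differentiable (by simp)
  have hLq'diff : Differentiable ℝ fun x => Lmap e x * q' x :=
    ((Lmap e).differentiable).mul hq'diff
  have hq'eq : q' = q := by
    funext u
    have h1 : diracOp e h u
        = diracOp e p' u + diracOp e (fun x => Lmap e x * q' x) u := by
      conv_lhs => rw [hfun]
      exact dirac_add e (hp'sm.differentiable (by simp)) hLq'diff u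
    rw [hp'mono u, zero_add, dirac_Lmul e he hq'sm hq'mono hq'hom u] at h1
    rw [hqdef]
    simp only
    rw [h1, smul_smul]
    rw [show -c * -((n : ℝ) + 2 * ((k - 1 : ℕ) : ℝ)) = 1 from by
      rw [hc, neg_mul_neg, inv_mul_cancel₀ hden]]
    rw [one_smul]
  refine ⟨?_, hq'eq⟩
  funext u
  have h2 := hdec' u
  rw [← Lmap_apply, hq'eq] at h2
  rw [hpdef]
  simp only
  rw [h2, add_sub_cancel_right]
end
end

section
/- Saalschütz summation: for a nonnegative integer k and parameters a, b, c, d with c + d = -k + a + b + 1 (and c, d avoiding nonpositive integers making terms undefined), Σ_{i=0}^{k} ((-k)_i (a)_i (b)_i)/((c)_i (d)_i i!) = ((c-a)_k (d-a)_k)/((c)_k (d)_k). -/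
/-!
Multiplying the `i`-th term by `(c)ₖ (d)ₖ` clears all denominators: with `(-k)ᵢ / i! = (-1)ⁱ C(k,i)`
and `(c)ₖ = (c)ᵢ (c+i)ₖ₋ᵢ`, the claim becomes the polynomial identity
`∑ᵢ (-1)ⁱ C(n,i) (a)ᵢ (b)ᵢ (c+i)ₙ₋ᵢ (d+i)ₙ₋ᵢ = (c-a)ₙ (d-a)ₙ` whenever `c + d = a + b + 1 - n`,
valid over any commutative ring. It is proved by induction on `n` in the Wilf–Zeilberger manner:
each term of the sum for `(n+1, d)` is `(c+n-a)(d-a)` times the corresponding term for `(n, d+1)`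
plus a difference `G (i+1) - G i`, so the sum telescopes onto the inductive hypothesis.
-/

open scoped Nat
open Finset Polynomial

section Saalschutz

local notation:max x:max "⁽" n "⁾" => Polynomial.eval x (ascPochhammer _ n)

section CommRing

variable {R : Type*} [CommRing R]

theorem ascPochhammer_eval_add (x : R) (m n : ℕ) : x⁽m + n⁾ = x⁽m⁾ * (x + m)⁽n⁾ := by
  rw [← ascPochhammer_mul, eval_mul, eval_comp]
  simp

theorem ascPochhammer_succ_left_eval (x : R) (n : ℕ) : x⁽n + 1⁾ = x * (x + 1)⁽n⁾ := by
  simp [ascPochhammer_succ_left, eval_comp]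

theorem ascPochhammer_eval_neg_natCast (k i : ℕ) :
    (-(k : R))⁽i⁾ = (-1) ^ i * i ! * k.choose i := by
  rw [ascPochhammer_eval_neg_eq_descPochhammer, descPochhammer_eval_eq_descFactorial,
    Nat.descFactorial_eq_factorial_mul_choose, Nat.cast_mul, mul_assoc]

/-- `(c)ₙ (d)ₙ` times the `i`-th term of `₃F₂(-n, a, b; c, d; 1)`. -/
noncomputable def saalschutzTerm (n : ℕ) (a b c d : R) (i : ℕ) : R :=
  (-1) ^ i * n.choose i * a⁽i⁾ * b⁽i⁾ * (c + i)⁽n - i⁾ * (d + i)⁽n - i⁾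

/-- The Wilf–Zeilberger certificate of `saalschutzTerm`. -/
noncomputable def saalschutzCert (n : ℕ) (a b c d : R) : ℕ → R
  | 0 => 0
  | j + 1 => (-1) ^ j * n.choose j * a⁽j + 1⁾ * b⁽j + 1⁾ * (c + j)⁽n - j⁾ * (d + 1 + j)⁽n - j⁾

variable {a b c d : R}

theorem saalschutzTerm_succ_zero (n : ℕ) (hb : b = c + d + n - a) :
    saalschutzTerm (n + 1) a b c d 0 =
      (c + n - a) * (d - a) * saalschutzTerm n a b c (d + 1) 0
        + (saalschutzCert n a b c d 1 - saalschutzCert n a b c d 0) := by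
  simp only [saalschutzTerm, saalschutzCert, pow_zero, Nat.choose_zero_right, Nat.cast_zero,
    Nat.cast_one, add_zero, Nat.sub_zero, zero_add, ascPochhammer_zero, ascPochhammer_one,
    eval_one, eval_X]
  rw [ascPochhammer_succ_eval n c, ascPochhammer_succ_left_eval d n, hb]
  ring

theorem saalschutzTerm_succ_self (n : ℕ) :
    saalschutzTerm (n + 1) a b c d (n + 1) =
      (c + n - a) * (d - a) * saalschutzTerm n a b c (d + 1) (n + 1)
        + (saalschutzCert n a b c d (n + 2) - saalschutzCert n a b c d (n + 1)) := by
  simp [saalschutzTerm, saalschutzCert, pow_succ]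

theorem saalschutzTerm_succ_of_lt (j m : ℕ) (hb : b = c + d + ↑(j + 1 + m) - a) :
    saalschutzTerm (j + 1 + m + 1) a b c d (j + 1) =
      (c + ↑(j + 1 + m) - a) * (d - a) * saalschutzTerm (j + 1 + m) a b c (d + 1) (j + 1)
        + (saalschutzCert (j + 1 + m) a b c d (j + 2)
          - saalschutzCert (j + 1 + m) a b c d (j + 1)) := by
  have hchoose : ((j + 1 + m).choose (j + 1) : R) * (j + 1) = (j + 1 + m).choose j * (m + 1) := by
    have h := Nat.choose_succ_right_eq (j + 1 + m) j
    rw [show j + 1 + m - j = m + 1 by omega] at h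
    exact_mod_cast congrArg (Nat.cast : ℕ → R) h
  simp only [saalschutzTerm, saalschutzCert, Nat.choose_succ_succ (j + 1 + m) j,
    show j + 1 + m + 1 - (j + 1) = m + 1 by omega, show j + 1 + m - (j + 1) = m by omega,
    show j + 1 + m - j = m + 1 by omega]
  rw [ascPochhammer_succ_eval m, ascPochhammer_succ_left_eval (d + _) m,
    ascPochhammer_succ_eval (j + 1) a, ascPochhammer_succ_eval (j + 1) b,
    ascPochhammer_succ_left_eval (c + _) m, ascPochhammer_succ_left_eval (d + 1 + _) m]
  subst hb
  push_cast [Nat.succ_eq_add_one]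
  rw [show c + (j : R) + 1 = c + (j + 1) by ring,
    show d + ((j : R) + 1) + 1 = d + 1 + (j + 1) by ring,
    show d + 1 + (j : R) + 1 = d + 1 + (j + 1) by ring]
  linear_combination (-1) ^ j * a⁽j + 1⁾ * (c + d + (j + 1 + m) - a)⁽j + 1⁾ *
    (c + (j + 1))⁽m⁾ * (d + 1 + (j + 1))⁽m⁾ * (d + j + 1) * hchoose

theorem saalschutzTerm_succ {n i : ℕ} (hb : b = c + d + n - a) (hi : i ≤ n + 1) :
    saalschutzTerm (n + 1) a b c d i =
      (c + n - a) * (d - a) * saalschutzTerm n a b c (d + 1) i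
        + (saalschutzCert n a b c d (i + 1) - saalschutzCert n a b c d i) := by
  rcases i with _ | j
  · exact saalschutzTerm_succ_zero n hb
  rcases (Nat.le_of_succ_le_succ hi).eq_or_lt with rfl | hj
  · exact saalschutzTerm_succ_self j
  obtain ⟨m, rfl⟩ : ∃ m, n = j + 1 + m := ⟨n - (j + 1), by omega⟩
  exact saalschutzTerm_succ_of_lt j m hb

theorem sum_saalschutzTerm (n : ℕ) (a b c d : R) (h : c + d = a + b + 1 - n) :
    ∑ i ∈ range (n + 1), saalschutzTerm n a b c d i = (c - a)⁽n⁾ * (d - a)⁽n⁾ := by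
  induction n generalizing d with
  | zero => simp [saalschutzTerm]
  | succ n ih =>
    have hb : b = c + d + n - a := by push_cast at h; linear_combination -h
    calc ∑ i ∈ range (n + 1 + 1), saalschutzTerm (n + 1) a b c d i
        = ∑ i ∈ range (n + 2), ((c + n - a) * (d - a) * saalschutzTerm n a b c (d + 1) i
            + (saalschutzCert n a b c d (i + 1) - saalschutzCert n a b c d i)) :=
          sum_congr rfl fun i hi => saalschutzTerm_succ hb (Nat.lt_succ_iff.mp (mem_range.mp hi))
      _ = (c + n - a) * (d - a) * ∑ i ∈ range (n + 2), saalschutzTerm n a b c (d + 1) i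
            + (saalschutzCert n a b c d (n + 2) - saalschutzCert n a b c d 0) := by
          rw [sum_add_distrib, ← mul_sum, sum_range_sub]
      _ = (c + n - a) * (d - a) * ((c - a)⁽n⁾ * (d + 1 - a)⁽n⁾) := by
          rw [sum_range_succ, ih (d + 1) (by push_cast at h; linear_combination h)]
          simp [saalschutzTerm, saalschutzCert]
      _ = (c - a)⁽n + 1⁾ * (d - a)⁽n + 1⁾ := by
          rw [ascPochhammer_succ_eval, ascPochhammer_succ_left_eval, sub_add_eq_add_sub d a 1]
          ring

end CommRing

section Field

variable {K : Type*} [Field K] [CharZero K] {a b c d : K}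

theorem saalschutz_summand_mul {k i : ℕ} (hi : i ≤ k) (hc : c⁽i⁾ ≠ 0) (hd : d⁽i⁾ ≠ 0) :
    (-(k : K))⁽i⁾ * a⁽i⁾ * b⁽i⁾ / (c⁽i⁾ * d⁽i⁾ * (i ! : K)) * (c⁽k⁾ * d⁽k⁾) =
      saalschutzTerm k a b c d i := by
  obtain ⟨m, rfl⟩ := Nat.exists_eq_add_of_le hi
  rw [ascPochhammer_eval_neg_natCast, ascPochhammer_eval_add c, ascPochhammer_eval_add d,
    saalschutzTerm, Nat.add_sub_cancel_left]
  have hfact : (i ! : K) ≠ 0 := Nat.cast_ne_zero.mpr i.factorial_ne_zero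
  field_simp

theorem saalschutz {k : ℕ} (hS : c + d = -(k : K) + a + b + 1)
    (hc : ∀ i ≤ k, c⁽i⁾ ≠ 0) (hd : ∀ i ≤ k, d⁽i⁾ ≠ 0) :
    ∑ i ∈ range (k + 1), (-(k : K))⁽i⁾ * a⁽i⁾ * b⁽i⁾ / (c⁽i⁾ * d⁽i⁾ * (i ! : K)) =
      (c - a)⁽k⁾ * (d - a)⁽k⁾ / (c⁽k⁾ * d⁽k⁾) := by
  rw [eq_div_iff (mul_ne_zero (hc k le_rfl) (hd k le_rfl)), sum_mul,
    ← sum_saalschutzTerm k a b c d (by linear_combination hS)]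
  refine sum_congr rfl fun i hi => ?_
  have hik : i ≤ k := Nat.lt_succ_iff.mp (mem_range.mp hi)
  exact saalschutz_summand_mul hik (hc i hik) (hd i hik)

end Field

end Saalschutz

/-- Saalschütz summation: for a nonnegative integer `k` and parameters `a, b, c, d` with
`c + d = -k + a + b + 1` (the Saalschützian condition), and `c`, `d` such that no Pochhammer
denominator vanishes,
`Σ_{i=0}^k ((-k)_i (a)_i (b)_i)/((c)_i (d)_i i!) = ((c-a)_k (d-a)_k)/((c)_k (d)_k)`. -/
theorem stmt13 (k : ℕ) (a b c d : ℝ)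
    (hS : c + d = -(k : ℝ) + a + b + 1)
    (hc : ∀ i : ℕ, i ≤ k → (ascPochhammer ℝ i).eval c ≠ 0)
    (hd : ∀ i : ℕ, i ≤ k → (ascPochhammer ℝ i).eval d ≠ 0) :
    ∑ i ∈ Finset.range (k + 1),
        ((ascPochhammer ℝ i).eval (-(k : ℝ)) * (ascPochhammer ℝ i).eval a *
            (ascPochhammer ℝ i).eval b) /
          ((ascPochhammer ℝ i).eval c * (ascPochhammer ℝ i).eval d * (i ! : ℝ))
      = ((ascPochhammer ℝ k).eval (c - a) * (ascPochhammer ℝ k).eval (d - a)) /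
          ((ascPochhammer ℝ k).eval c * (ascPochhammer ℝ k).eval d) :=
  saalschutz hS hc hd
end
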